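/- arXiv:2506.13570 — 3 statements merged into one kernel-verified Lean document; each statement's English description precedes it below -/
import Mathlib

section
/- Let d ≥ 1 and let q1, q2, q3 : ℝ → ℝ^d be a solution of the three-body problem in ℝ^d with arbitrary positive masses m1, m2, m3 > 0. If two of the three mutual distances r_ij(t) = ‖q_i(t) − q_j(t)‖ are constant in t, then the third mutual distance is also constant in t; that is, the solution is a relative equilibrium. -/
/-!
Let `q₁` be the body at which the two constant distances meet, and put `u = q₁ - q₂`,
`v = q₁ - q₃`, so that `‖u‖ = a`, `‖v‖ = b` and the third distance is `r = ‖u - v‖`.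
Since `‖u‖` is constant, `⟪u, u''⟫ = -‖u'‖²`, so Newton's equations express `‖u'‖²`, and
likewise `‖v'‖²`, through `⟪u, v⟫` and `r`. Differentiating these two identities gives two
linear relations between `A = ⟪u', v⟫` and `B = ⟪u, v'⟫` with coefficients polynomial in `r`.
Where `r' = -(A + B) / r` is nonzero, eliminating `A` and `B` makes `r` a root of a fixed
nonzero polynomial of degree 8. So on the open set `{r' ≠ 0}` the continuous function `r` takes
finitely many values, hence is locally constant, forcing `r' = 0` there: the set is empty.
-/

open scoped InnerProductSpace
open Polynomial

section Calculus

variable {F : Type*} [NormedAddCommGroup F] [InnerProductSpace ℝ F]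

theorem HasDerivAt.norm {f : ℝ → F} {f' : F} {x : ℝ} (hf : HasDerivAt f f' x) (h0 : f x ≠ 0) :
    HasDerivAt (fun t => ‖f t‖) (⟪f x, f'⟫_ℝ / ‖f x‖) x := by
  have h := hf.norm_sq.sqrt (by positivity)
  simp only [Real.sqrt_sq (norm_nonneg _)] at h
  convert h using 1
  ring

theorem HasDerivAt.eq_zero_of_forall_eq {f : ℝ → F} {f' : F} {x : ℝ} {c : F}
    (hf : HasDerivAt f f' x) (hc : ∀ t, f t = c) : f' = 0 := by
  rw [show f = fun _ => c from funext hc] at hf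
  exact hf.unique (hasDerivAt_const x c)

theorem ContDiff.hasDerivAt_deriv_of_two {f : ℝ → F} (hf : ContDiff ℝ 2 f) (t : ℝ) :
    HasDerivAt (deriv f) (deriv (deriv f) t) t :=
  ((hf.iterate_deriv' 1 1).differentiable one_ne_zero t).hasDerivAt

variable {u u' u'' : ℝ → F} {a : ℝ}

theorem inner_eq_zero_of_norm_eq_const (hu : ∀ t, HasDerivAt u (u' t) t) (ha : ∀ t, ‖u t‖ = a)
    (t : ℝ) : ⟪u t, u' t⟫_ℝ = 0 := by
  have h := (hu t).norm_sq.eq_zero_of_forall_eq fun s => by rw [ha s]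
  linarith

theorem inner_eq_neg_norm_sq_of_norm_eq_const (hu : ∀ t, HasDerivAt u (u' t) t)
    (hu' : ∀ t, HasDerivAt u' (u'' t) t) (ha : ∀ t, ‖u t‖ = a) (t : ℝ) :
    ⟪u t, u'' t⟫_ℝ = -‖u' t‖ ^ 2 := by
  have h := ((hu t).inner ℝ (hu' t)).eq_zero_of_forall_eq (inner_eq_zero_of_norm_eq_const hu ha)
  rw [real_inner_self_eq_norm_sq] at h
  linarith

end Calculus

theorem eq_zero_of_hasDerivAt_of_mem_finite {f f' : ℝ → ℝ} {S : Set ℝ} (hS : S.Finite)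
    (hf : ∀ t, HasDerivAt f (f' t) t) (hf' : Continuous f') (hS_mem : ∀ t, f' t ≠ 0 → f t ∈ S)
    (t : ℝ) : f' t = 0 := by
  by_contra h
  obtain ⟨ε, hε, hball⟩ := Metric.isOpen_iff.mp (isOpen_ne_fun hf' continuous_const) t h
  have hconst : ∀ s ∈ Metric.ball t ε, f s = f t := fun s hs =>
    (convex_ball t ε).isPreconnected.constant_of_mapsTo hS.isDiscrete
      (fun s _ => (hf s).continuousAt.continuousWithinAt) (fun s hs => hS_mem s (hball hs)) hs
      (Metric.mem_ball_self hε)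
  exact h ((hf t).unique ((hasDerivAt_const t (f t)).congr_of_eventuallyEq
    (Filter.eventually_of_mem (Metric.ball_mem_nhds t hε) hconst)))

-- The eliminant of the relations `(b³ - r³) r² (3A + B) = 3 (a² - p) (A + B) b³` and
-- `(a³ - r³) r² (A + 3B) = 3 (b² - p) (A + B) a³` with `2p = a² + b² - r²`, divided by `A + B`.
noncomputable def hingePoly (a b : ℝ) : ℝ[X] :=
  8 * X ^ 2 * (C (a ^ 3) - X ^ 3) * (C (b ^ 3) - X ^ 3)
    - 3 * ((C (a ^ 2 - b ^ 2) + X ^ 2) * C (b ^ 3) * (C (a ^ 3) - X ^ 3)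
      + (C (b ^ 2 - a ^ 2) + X ^ 2) * C (a ^ 3) * (C (b ^ 3) - X ^ 3))

theorem hingePoly_ne_zero (a b : ℝ) : hingePoly a b ≠ 0 := by
  intro h
  have h8 : (hingePoly a b).coeff 8 = 8 := by unfold hingePoly; compute_degree!
  simp [h] at h8

theorem isRoot_hingePoly {a b r p A B : ℝ}
    (ha : (a ^ 3 - r ^ 3) * r ^ 2 * (A + 3 * B) = 3 * (b ^ 2 - p) * (A + B) * a ^ 3)
    (hb : (b ^ 3 - r ^ 3) * r ^ 2 * (3 * A + B) = 3 * (a ^ 2 - p) * (A + B) * b ^ 3)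
    (hr : r ^ 2 = a ^ 2 + b ^ 2 - 2 * p) (hAB : A + B ≠ 0) : (hingePoly a b).IsRoot r := by
  have h : (A + B) * (hingePoly a b).eval r = 0 := by
    simp only [hingePoly, eval_sub, eval_add, eval_mul, eval_pow, eval_C, eval_X, eval_ofNat]
    linear_combination 2 * (b ^ 3 - r ^ 3) * ha + 2 * (a ^ 3 - r ^ 3) * hb
      - 3 * (A + B) * (b ^ 3 * (a ^ 3 - r ^ 3) + a ^ 3 * (b ^ 3 - r ^ 3)) * hr
  exact (mul_eq_zero.mp h).resolve_left hAB

section RelativeMotion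

variable {E : Type*} [NormedAddCommGroup E] [InnerProductSpace ℝ E]
  {u v u' v' u'' : ℝ → E} {a b M m : ℝ}

theorem hasDerivAt_norm_sub_of_norm_eq_const (hu : ∀ t, HasDerivAt u (u' t) t)
    (hv : ∀ t, HasDerivAt v (v' t) t) (ha : ∀ t, ‖u t‖ = a) (hb : ∀ t, ‖v t‖ = b)
    (huv : ∀ t, u t ≠ v t) (t : ℝ) :
    HasDerivAt (fun s => ‖u s - v s‖)
      (-(⟪u' t, v t⟫_ℝ + ⟪u t, v' t⟫_ℝ) / ‖u t - v t‖) t := by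
  convert HasDerivAt.norm (f := fun s => u s - v s) ((hu t).sub (hv t))
    (sub_ne_zero.mpr (huv t)) using 2
  simp only [inner_sub_left, inner_sub_right, inner_eq_zero_of_norm_eq_const hu ha,
    inner_eq_zero_of_norm_eq_const hv hb, real_inner_comm (u' t) (v t)]
  ring

theorem norm_deriv_sq_eq_of_norm_eq_const (hu : ∀ t, HasDerivAt u (u' t) t)
    (hu' : ∀ t, HasDerivAt u' (u'' t) t) (ha : ∀ t, ‖u t‖ = a)
    (hu'' : ∀ t, u'' t = -(M / a ^ 3) • u t - (m / b ^ 3) • v t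
      - (m / ‖u t - v t‖ ^ 3) • (u t - v t)) (t : ℝ) :
    ‖u' t‖ ^ 2 = M / a ^ 3 * a ^ 2 + m / b ^ 3 * ⟪u t, v t⟫_ℝ
      + m * (a ^ 2 - ⟪u t, v t⟫_ℝ) / ‖u t - v t‖ ^ 3 := by
  have h := inner_eq_neg_norm_sq_of_norm_eq_const hu hu' ha t
  simp only [hu'' t, inner_sub_right, inner_smul_right, real_inner_self_eq_norm_sq, ha] at h
  linear_combination h

theorem inner_deriv_relation_of_norm_eq_const (hu : ∀ t, HasDerivAt u (u' t) t)
    (hv : ∀ t, HasDerivAt v (v' t) t)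
    (hu' : ∀ t, HasDerivAt u' (u'' t) t) (ha : ∀ t, ‖u t‖ = a) (hb : ∀ t, ‖v t‖ = b)
    (hb₀ : b ≠ 0) (hm : m ≠ 0) (huv : ∀ t, u t ≠ v t)
    (hu'' : ∀ t, u'' t = -(M / a ^ 3) • u t - (m / b ^ 3) • v t
      - (m / ‖u t - v t‖ ^ 3) • (u t - v t)) (t : ℝ) :
    (b ^ 3 - ‖u t - v t‖ ^ 3) * ‖u t - v t‖ ^ 2 * (3 * ⟪u' t, v t⟫_ℝ + ⟪u t, v' t⟫_ℝ)
      = 3 * (a ^ 2 - ⟪u t, v t⟫_ℝ) * (⟪u' t, v t⟫_ℝ + ⟪u t, v' t⟫_ℝ) * b ^ 3 := by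
  have hr := hasDerivAt_norm_sub_of_norm_eq_const hu hv ha hb huv t
  have hr₀ : ‖u t - v t‖ ≠ 0 := norm_ne_zero_iff.mpr (sub_ne_zero.mpr (huv t))
  have hp : HasDerivAt (fun s => ⟪u s, v s⟫_ℝ) (⟪u' t, v t⟫_ℝ + ⟪u t, v' t⟫_ℝ) t := by
    simpa only [add_comm] using (hu t).inner ℝ (hv t)
  have hK := (hu' t).norm_sq
  rw [funext (norm_deriv_sq_eq_of_norm_eq_const hu hu' ha hu'')] at hK
  have hK' := (((hp.const_mul _).const_add _).add
    (((hp.const_sub _).const_mul m).div (hr.pow 3) (pow_ne_zero 3 hr₀))).unique hK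
  simp only [hu'' t, inner_sub_right, inner_smul_right, inner_eq_zero_of_norm_eq_const hu ha t,
    real_inner_comm (u t), Pi.pow_apply] at hK'
  norm_num at hK'
  field_simp at hK'
  linear_combination -hK'

end RelativeMotion

theorem exists_norm_sub_eq_const_of_relative_motion {E : Type*} [NormedAddCommGroup E]
    [InnerProductSpace ℝ E] {u v u' v' u'' v'' : ℝ → E} {a b Mu Mv mu mv : ℝ}
    (hu : ∀ t, HasDerivAt u (u' t) t) (hv : ∀ t, HasDerivAt v (v' t) t)
    (hu' : ∀ t, HasDerivAt u' (u'' t) t) (hv' : ∀ t, HasDerivAt v' (v'' t) t)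
    (ha : ∀ t, ‖u t‖ = a) (hb : ∀ t, ‖v t‖ = b) (ha₀ : a ≠ 0) (hb₀ : b ≠ 0)
    (hmu : mu ≠ 0) (hmv : mv ≠ 0) (huv : ∀ t, u t ≠ v t)
    (hu'' : ∀ t, u'' t = -(Mu / a ^ 3) • u t - (mu / b ^ 3) • v t
      - (mu / ‖u t - v t‖ ^ 3) • (u t - v t))
    (hv'' : ∀ t, v'' t = -(Mv / b ^ 3) • v t - (mv / a ^ 3) • u t
      - (mv / ‖v t - u t‖ ^ 3) • (v t - u t)) :
    ∃ c, ∀ t, ‖u t - v t‖ = c := by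
  have hr := hasDerivAt_norm_sub_of_norm_eq_const hu hv ha hb huv
  have hr' : Continuous fun t => -(⟪u' t, v t⟫_ℝ + ⟪u t, v' t⟫_ℝ) / ‖u t - v t‖ := by
    have hc {f f' : ℝ → E} (hf : ∀ t, HasDerivAt f (f' t) t) : Continuous f :=
      continuous_iff_continuousAt.mpr fun t => (hf t).continuousAt
    exact (((hc hu').inner (hc hv)).add ((hc hu).inner (hc hv'))).neg.div
      ((hc hu).sub (hc hv)).norm fun t => norm_ne_zero_iff.mpr (sub_ne_zero.mpr (huv t))
  have hroot (t : ℝ) (ht : -(⟪u' t, v t⟫_ℝ + ⟪u t, v' t⟫_ℝ) / ‖u t - v t‖ ≠ 0) :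
      ‖u t - v t‖ ∈ {x | (hingePoly a b).IsRoot x} := by
    refine isRoot_hingePoly ?_
      (inner_deriv_relation_of_norm_eq_const hu hv hu' ha hb hb₀ hmu huv hu'' t) ?_ ?_
    · have h := inner_deriv_relation_of_norm_eq_const hv hu hv' hb ha ha₀ hmv
        (fun t => (huv t).symm) hv'' t
      rw [norm_sub_rev, real_inner_comm (u t) (v t), real_inner_comm (u' t) (v t),
        real_inner_comm (u t) (v' t)] at h
      linear_combination h
    · rw [norm_sub_sq_real, ha, hb]; ring
    · intro h; simp [h] at ht
  have hzero := eq_zero_of_hasDerivAt_of_mem_finite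
    (finite_setOfPred_isRoot (hingePoly_ne_zero a b)) hr hr' hroot
  exact ⟨_, fun t => is_const_of_deriv_eq_zero (fun s => (hr s).differentiableAt)
    (fun s => (hr s).deriv.trans (hzero s)) t 0⟩

theorem exists_norm_sub_eq_const_of_three_body {E : Type*} [NormedAddCommGroup E]
    [InnerProductSpace ℝ E] {m1 m2 m3 a b : ℝ} {q1 q2 q3 : ℝ → E}
    (hm2 : m2 ≠ 0) (hm3 : m3 ≠ 0)
    (hq1 : ContDiff ℝ 2 q1) (hq2 : ContDiff ℝ 2 q2) (hq3 : ContDiff ℝ 2 q3)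
    (hsep12 : ∀ t, q1 t ≠ q2 t) (hsep13 : ∀ t, q1 t ≠ q3 t) (hsep23 : ∀ t, q2 t ≠ q3 t)
    (hN1 : ∀ t, deriv (deriv q1) t =
      (m2 / ‖q2 t - q1 t‖ ^ 3) • (q2 t - q1 t) + (m3 / ‖q3 t - q1 t‖ ^ 3) • (q3 t - q1 t))
    (hN2 : ∀ t, deriv (deriv q2) t =
      (m1 / ‖q1 t - q2 t‖ ^ 3) • (q1 t - q2 t) + (m3 / ‖q3 t - q2 t‖ ^ 3) • (q3 t - q2 t))
    (hN3 : ∀ t, deriv (deriv q3) t =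
      (m1 / ‖q1 t - q3 t‖ ^ 3) • (q1 t - q3 t) + (m2 / ‖q2 t - q3 t‖ ^ 3) • (q2 t - q3 t))
    (h12 : ∀ t, ‖q1 t - q2 t‖ = a) (h13 : ∀ t, ‖q1 t - q3 t‖ = b) :
    ∃ c, ∀ t, ‖q2 t - q3 t‖ = c := by
  have hD {q : ℝ → E} (hq : ContDiff ℝ 2 q) (t : ℝ) : HasDerivAt q (deriv q t) t :=
    (hq.differentiable two_ne_zero t).hasDerivAt
  have h21 (t : ℝ) : ‖q2 t - q1 t‖ = a := by rw [norm_sub_rev, h12]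
  have h31 (t : ℝ) : ‖q3 t - q1 t‖ = b := by rw [norm_sub_rev, h13]
  have huv (t : ℝ) : (q1 t - q2 t) - (q1 t - q3 t) = q3 t - q2 t := by abel
  have hvu (t : ℝ) : (q1 t - q3 t) - (q1 t - q2 t) = q2 t - q3 t := by abel
  obtain ⟨c, hc⟩ := exists_norm_sub_eq_const_of_relative_motion
    (u := fun t => q1 t - q2 t) (v := fun t => q1 t - q3 t) (Mu := m1 + m2) (Mv := m1 + m3)
    (fun t => (hD hq1 t).sub (hD hq2 t)) (fun t => (hD hq1 t).sub (hD hq3 t))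
    (fun t => (hq1.hasDerivAt_deriv_of_two t).sub (hq2.hasDerivAt_deriv_of_two t))
    (fun t => (hq1.hasDerivAt_deriv_of_two t).sub (hq3.hasDerivAt_deriv_of_two t))
    h12 h13 (h12 0 ▸ norm_ne_zero_iff.mpr (sub_ne_zero.mpr (hsep12 0)))
    (h13 0 ▸ norm_ne_zero_iff.mpr (sub_ne_zero.mpr (hsep13 0))) hm3 hm2
    (fun t h => hsep23 t (sub_right_inj.mp h))
    (fun t => by rw [hN1, hN2, huv, h21, h31, h12]; module)
    (fun t => by rw [hN1, hN3, hvu, h21, h31, h13, norm_sub_rev (q2 t)]; module)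
  exact ⟨c, fun t => by rw [← hc t, huv, norm_sub_rev]⟩

theorem three_body_unhinged_general
    (d : ℕ) (m1 m2 m3 : ℝ)
    (hm1 : 0 < m1) (hm2 : 0 < m2) (hm3 : 0 < m3)
    (q1 q2 q3 : ℝ → EuclideanSpace ℝ (Fin d))
    (hq1 : ContDiff ℝ 2 q1) (hq2 : ContDiff ℝ 2 q2) (hq3 : ContDiff ℝ 2 q3)
    (hsep12 : ∀ t, q1 t ≠ q2 t) (hsep13 : ∀ t, q1 t ≠ q3 t)
    (hsep23 : ∀ t, q2 t ≠ q3 t)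
    (hN1 : ∀ t, deriv (deriv q1) t =
      (m2 / ‖q2 t - q1 t‖ ^ 3) • (q2 t - q1 t) +
        (m3 / ‖q3 t - q1 t‖ ^ 3) • (q3 t - q1 t))
    (hN2 : ∀ t, deriv (deriv q2) t =
      (m1 / ‖q1 t - q2 t‖ ^ 3) • (q1 t - q2 t) +
        (m3 / ‖q3 t - q2 t‖ ^ 3) • (q3 t - q2 t))
    (hN3 : ∀ t, deriv (deriv q3) t =
      (m1 / ‖q1 t - q3 t‖ ^ 3) • (q1 t - q3 t) +
        (m2 / ‖q2 t - q3 t‖ ^ 3) • (q2 t - q3 t))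
    (htwo : ((∃ c, ∀ t, ‖q1 t - q2 t‖ = c) ∧ (∃ c, ∀ t, ‖q1 t - q3 t‖ = c)) ∨
      ((∃ c, ∀ t, ‖q1 t - q2 t‖ = c) ∧ (∃ c, ∀ t, ‖q2 t - q3 t‖ = c)) ∨
      ((∃ c, ∀ t, ‖q1 t - q3 t‖ = c) ∧ (∃ c, ∀ t, ‖q2 t - q3 t‖ = c))) :
    (∃ c, ∀ t, ‖q1 t - q2 t‖ = c) ∧ (∃ c, ∀ t, ‖q1 t - q3 t‖ = c) ∧
      (∃ c, ∀ t, ‖q2 t - q3 t‖ = c) := by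
  have hswap {x y : ℝ → EuclideanSpace ℝ (Fin d)} {c : ℝ} (h : ∀ t, ‖x t - y t‖ = c) :
      ∀ t, ‖y t - x t‖ = c := fun t => by rw [norm_sub_rev, h]
  rcases htwo with ⟨⟨a, h12⟩, ⟨b, h13⟩⟩ | ⟨⟨a, h12⟩, ⟨b, h23⟩⟩ | ⟨⟨a, h13⟩, ⟨b, h23⟩⟩
  · exact ⟨⟨a, h12⟩, ⟨b, h13⟩, exists_norm_sub_eq_const_of_three_body hm2.ne' hm3.ne'
      hq1 hq2 hq3 hsep12 hsep13 hsep23 hN1 hN2 hN3 h12 h13⟩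
  · refine ⟨⟨a, h12⟩, exists_norm_sub_eq_const_of_three_body hm1.ne' hm3.ne'
      hq2 hq1 hq3 (fun t => (hsep12 t).symm) hsep23 hsep13 hN2 hN1
      (fun t => (hN3 t).trans (add_comm _ _)) (hswap h12) h23, ⟨b, h23⟩⟩
  · obtain ⟨c, hc⟩ := exists_norm_sub_eq_const_of_three_body hm1.ne' hm2.ne'
      hq3 hq1 hq2 (fun t => (hsep13 t).symm) (fun t => (hsep23 t).symm) hsep12
      hN3 (fun t => (hN1 t).trans (add_comm _ _)) (fun t => (hN2 t).trans (add_comm _ _))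
      (hswap h13) (hswap h23)
    exact ⟨⟨c, hc⟩, ⟨a, h13⟩, ⟨b, h23⟩⟩

/-- The three-body problem in `ℝ^d` with arbitrary positive masses is unhinged:
if two of the three mutual distances are constant in time, then the third one is
also constant, i.e. the solution is a relative equilibrium. -/
theorem three_body_unhinged
    (d : ℕ) (hd : 1 ≤ d) (m1 m2 m3 : ℝ)
    (hm1 : 0 < m1) (hm2 : 0 < m2) (hm3 : 0 < m3)
    (q1 q2 q3 : ℝ → EuclideanSpace ℝ (Fin d))
    (hq1 : ContDiff ℝ 2 q1) (hq2 : ContDiff ℝ 2 q2) (hq3 : ContDiff ℝ 2 q3)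
    (hsep12 : ∀ t, q1 t ≠ q2 t) (hsep13 : ∀ t, q1 t ≠ q3 t)
    (hsep23 : ∀ t, q2 t ≠ q3 t)
    (hN1 : ∀ t, deriv (deriv q1) t =
      (m2 / ‖q2 t - q1 t‖ ^ 3) • (q2 t - q1 t) +
        (m3 / ‖q3 t - q1 t‖ ^ 3) • (q3 t - q1 t))
    (hN2 : ∀ t, deriv (deriv q2) t =
      (m1 / ‖q1 t - q2 t‖ ^ 3) • (q1 t - q2 t) +
        (m3 / ‖q3 t - q2 t‖ ^ 3) • (q3 t - q2 t))
    (hN3 : ∀ t, deriv (deriv q3) t =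
      (m1 / ‖q1 t - q3 t‖ ^ 3) • (q1 t - q3 t) +
        (m2 / ‖q2 t - q3 t‖ ^ 3) • (q2 t - q3 t))
    (htwo : ((∃ c, ∀ t, ‖q1 t - q2 t‖ = c) ∧ (∃ c, ∀ t, ‖q1 t - q3 t‖ = c)) ∨
      ((∃ c, ∀ t, ‖q1 t - q2 t‖ = c) ∧ (∃ c, ∀ t, ‖q2 t - q3 t‖ = c)) ∨
      ((∃ c, ∀ t, ‖q1 t - q3 t‖ = c) ∧ (∃ c, ∀ t, ‖q2 t - q3 t‖ = c))) :
    (∃ c, ∀ t, ‖q1 t - q2 t‖ = c) ∧ (∃ c, ∀ t, ‖q1 t - q3 t‖ = c) ∧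
      (∃ c, ∀ t, ‖q2 t - q3 t‖ = c) :=
  three_body_unhinged_general d m1 m2 m3 hm1 hm2 hm3 q1 q2 q3 hq1 hq2 hq3 hsep12 hsep13 hsep23 hN1
    hN2 hN3 htwo
end

section
/- Let m > 0 and let 0 < a < b. Define q3(t) = (0,0), q1(t) = a(cos(ω_a t), sin(ω_a t)) with ω_a = √(m/a³), and q2(t) = b(cos(ω_b t), sin(ω_b t)) with ω_b = √(m/b³). Then these curves satisfy the equations of the planar three-body problem with masses m1 = m2 = 0 and m3 = m, namely q1''(t) = m(q3(t) − q1(t))/‖q3(t) − q1(t)‖³, q2''(t) = m(q3(t) − q2(t))/‖q3(t) − q2(t)‖³, and q3''(t) = 0; moreover the distances r_13(t) = ‖q_1(t) − q_3(t)‖ = a and r_23(t) = ‖q_2(t) − q_3(t)‖ = b are constant, while r_12(t) = ‖q_1(t) − q_2(t)‖ is not constant. In particular, hinged (partially rigid but not rigid) motions exist when two of the masses are zero. -/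
/-! The two light bodies feel only the central mass `m` and not each other, so each moves
on its own Kepler circle: `r (cos ωt, sin ωt)` has acceleration `-ω² q`, which equals the
Newtonian pull `-(m / r³) q` exactly when `ω² r³ = m`. The distances to the centre are then
the radii, while the law of cosines gives `r₁₂² = a² + b² - 2ab cos((ω_a - ω_b) t)`; since
`ω_a ≠ ω_b` the angle `(ω_a - ω_b) t` sweeps from `0` to `π`, and `r₁₂` moves from `b - a`
to `a + b`. -/

open Real

noncomputable def circularOrbit (r ω t : ℝ) : EuclideanSpace ℝ (Fin 2) :=
  (WithLp.equiv 2 (Fin 2 → ℝ)).symm ![r * cos (ω * t), r * sin (ω * t)]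

lemma hasDerivAt_withLp_equiv_symm_pair {x y : ℝ → ℝ} {x' y' t : ℝ}
    (hx : HasDerivAt x x' t) (hy : HasDerivAt y y' t) :
    HasDerivAt (fun s => (WithLp.equiv 2 (Fin 2 → ℝ)).symm ![x s, y s])
      ((WithLp.equiv 2 (Fin 2 → ℝ)).symm ![x', y']) t := by
  have hpair : HasDerivAt (fun s => ![x s, y s]) ![x', y'] t := by
    rw [hasDerivAt_pi]
    intro i
    fin_cases i
    · simpa using hx
    · simpa using hy
  exact (PiLp.continuousLinearEquiv 2 ℝ (fun _ : Fin 2 => ℝ)).symm.hasFDerivAt.comp_hasDerivAt t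
    hpair

lemma hasDerivAt_mul_cos_mul (r ω t : ℝ) :
    HasDerivAt (fun s => r * cos (ω * s)) (-(r * ω * sin (ω * t))) t :=
  (((hasDerivAt_id' t).const_mul ω).cos.const_mul r).congr_deriv (by ring)

lemma hasDerivAt_mul_sin_mul (r ω t : ℝ) :
    HasDerivAt (fun s => r * sin (ω * s)) (r * ω * cos (ω * t)) t :=
  (((hasDerivAt_id' t).const_mul ω).sin.const_mul r).congr_deriv (by ring)

lemma deriv_circularOrbit (r ω : ℝ) :
    deriv (circularOrbit r ω) = fun t =>
      (WithLp.equiv 2 (Fin 2 → ℝ)).symm ![-(r * ω * sin (ω * t)), r * ω * cos (ω * t)] :=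
  funext fun t =>
    (hasDerivAt_withLp_equiv_symm_pair (hasDerivAt_mul_cos_mul r ω t)
      (hasDerivAt_mul_sin_mul r ω t)).deriv

lemma deriv_deriv_circularOrbit (r ω t : ℝ) :
    deriv (deriv (circularOrbit r ω)) t = -ω ^ 2 • circularOrbit r ω t := by
  have hx : HasDerivAt (fun s => -(r * ω * sin (ω * s))) (-ω ^ 2 * (r * cos (ω * t))) t :=
    (hasDerivAt_mul_sin_mul (r * ω) ω t).neg.congr_deriv (by ring)
  have hy : HasDerivAt (fun s => r * ω * cos (ω * s)) (-ω ^ 2 * (r * sin (ω * t))) t :=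
    (hasDerivAt_mul_cos_mul (r * ω) ω t).congr_deriv (by ring)
  rw [deriv_circularOrbit, (hasDerivAt_withLp_equiv_symm_pair hx hy).deriv]
  ext i
  fin_cases i <;> simp [circularOrbit]

lemma norm_circularOrbit_sub_sq (a α b β t : ℝ) :
    ‖circularOrbit a α t - circularOrbit b β t‖ ^ 2 =
      a ^ 2 + b ^ 2 - 2 * a * b * cos ((α - β) * t) := by
  rw [EuclideanSpace.norm_sq_eq, Fin.sum_univ_two, sub_mul, cos_sub]
  simp only [circularOrbit, PiLp.sub_apply, WithLp.equiv_symm_apply,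
    Matrix.cons_val_zero, Matrix.cons_val_one, Real.norm_eq_abs, sq_abs]
  linear_combination a ^ 2 * sin_sq_add_cos_sq (α * t) + b ^ 2 * sin_sq_add_cos_sq (β * t)

lemma norm_circularOrbit (r ω t : ℝ) : ‖circularOrbit r ω t‖ = |r| := by
  have h := norm_circularOrbit_sub_sq r ω 0 0 t
  rw [show circularOrbit 0 0 t = 0 by ext i; fin_cases i <;> simp [circularOrbit],
    sub_zero] at h
  rw [← sqrt_sq (norm_nonneg _), h]
  simpa using sqrt_sq_eq_abs r

lemma not_exists_norm_circularOrbit_sub_eq_const {a α b β : ℝ} (ha : a ≠ 0) (hb : b ≠ 0)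
    (hαβ : α ≠ β) : ¬∃ c, ∀ t, ‖circularOrbit a α t - circularOrbit b β t‖ = c := by
  rintro ⟨c, hc⟩
  have hstart := norm_circularOrbit_sub_sq a α b β 0
  have hhalf := norm_circularOrbit_sub_sq a α b β (π / (α - β))
  rw [hc, mul_zero, cos_zero] at hstart
  rw [hc, mul_div_cancel₀ _ (sub_ne_zero.mpr hαβ), cos_pi] at hhalf
  exact mul_ne_zero ha hb (by linarith)

lemma deriv_deriv_circularOrbit_eq_gravity {m r ω : ℝ} (hr : 0 < r) (hω : ω ^ 2 = m / r ^ 3)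
    (t : ℝ) :
    deriv (deriv (circularOrbit r ω)) t =
      (m / ‖0 - circularOrbit r ω t‖ ^ 3) • (0 - circularOrbit r ω t) := by
  rw [deriv_deriv_circularOrbit, zero_sub, norm_neg, norm_circularOrbit, abs_of_pos hr, ← hω,
    smul_neg, neg_smul]

/-- Hinged motions exist when two of the three masses vanish: with `m₁ = m₂ = 0`
and `m₃ = m`, two bodies on circular orbits of radii `a < b` around the third
give a solution where `r₁₃ ≡ a` and `r₂₃ ≡ b` are constant but `r₁₂` is not. -/
theorem hinged_solution_with_two_zero_masses
    (m a b : ℝ) (hm : 0 < m) (ha : 0 < a) (hab : a < b) :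
    ∀ q1 q2 q3 : ℝ → EuclideanSpace ℝ (Fin 2),
      (q1 = fun t => (WithLp.equiv 2 (Fin 2 → ℝ)).symm
        ![a * Real.cos (Real.sqrt (m / a ^ 3) * t),
          a * Real.sin (Real.sqrt (m / a ^ 3) * t)]) →
      (q2 = fun t => (WithLp.equiv 2 (Fin 2 → ℝ)).symm
        ![b * Real.cos (Real.sqrt (m / b ^ 3) * t),
          b * Real.sin (Real.sqrt (m / b ^ 3) * t)]) →
      (q3 = fun _ => 0) →
      (∀ t, deriv (deriv q1) t = (m / ‖q3 t - q1 t‖ ^ 3) • (q3 t - q1 t)) ∧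
      (∀ t, deriv (deriv q2) t = (m / ‖q3 t - q2 t‖ ^ 3) • (q3 t - q2 t)) ∧
      (∀ t, deriv (deriv q3) t = 0) ∧
      (∀ t, ‖q1 t - q3 t‖ = a) ∧
      (∀ t, ‖q2 t - q3 t‖ = b) ∧
      ¬(∃ c, ∀ t, ‖q1 t - q2 t‖ = c) := by
  rintro q1 q2 q3 rfl rfl rfl
  have hb : 0 < b := ha.trans hab
  have kepler {r : ℝ} (hr : 0 < r) : √(m / r ^ 3) ^ 2 = m / r ^ 3 :=
    sq_sqrt (div_pos hm (pow_pos hr 3)).le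
  have hω : √(m / a ^ 3) ≠ √(m / b ^ 3) :=
    (sqrt_lt_sqrt (div_pos hm (pow_pos hb 3)).le
      (div_lt_div_of_pos_left hm (pow_pos ha 3) (pow_lt_pow_left₀ hab ha.le three_ne_zero))).ne'
  refine ⟨deriv_deriv_circularOrbit_eq_gravity ha (kepler ha),
    deriv_deriv_circularOrbit_eq_gravity hb (kepler hb), fun t => by simp, fun t => ?_, fun t => ?_,
    not_exists_norm_circularOrbit_sub_eq_const ha.ne' hb.ne' hω⟩
  · exact (congrArg norm (sub_zero (circularOrbit a _ t))).trans
      ((norm_circularOrbit a _ t).trans (abs_of_pos ha))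
  · exact (congrArg norm (sub_zero (circularOrbit b _ t))).trans
      ((norm_circularOrbit b _ t).trans (abs_of_pos hb))
end

section
/- There exist T > 0 and curves q1, q2, q3 : (−T, T) → ℝ² solving the planar circular restricted three-body problem with masses m1 = m2 = 1 and m3 = 0 — that is, q1''(t) = (q2(t) − q1(t))/‖q2(t) − q1(t)‖³, q2''(t) = (q1(t) − q2(t))/‖q1(t) − q2(t)‖³, and q3''(t) = (q1(t) − q3(t))/‖q1(t) − q3(t)‖³ + (q2(t) − q3(t))/‖q2(t) − q3(t)‖³, with q_i(t) ≠ q_j(t) for i ≠ j — such that r_12(t) = ‖q_1(t) − q_2(t)‖ = 1 for all t but r_13(t) = ‖q_1(t) − q_3(t)‖ is not constant. In particular, the nonexistence of partially rigid motions fails if one of the masses is zero. -/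
/-!
Two unit masses at distance 1 rotating rigidly about their midpoint with angular velocity `√2`
solve the two-body problem, so `r₁₂ ≡ 1`. The massless third body then obeys a time-dependent
ODE whose right-hand side is smooth away from collisions, so Picard–Lindelöf gives a local
solution from any non-collision initial state. Started at `(1, 0)` with velocity `(1/2, 0)`, the
derivative of `r₁₃²` at `t = 0` is `2⟪q₁ - q₃, q₁' - q₃'⟫ = 1/2 ≠ 0`, so `r₁₃` is not constant.
-/

open Set Filter Topology Real

section Prod

variable {E F : Type*} [NormedAddCommGroup E] [NormedSpace ℝ E] [NormedAddCommGroup F]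
  [NormedSpace ℝ F] {f : ℝ → E × F} {f' : E × F} {t : ℝ}

theorem HasDerivAt.fst (h : HasDerivAt f f' t) : HasDerivAt (fun s => (f s).1) f'.1 t := by
  simpa using h.hasFDerivAt.fst.hasDerivAt

theorem HasDerivAt.snd (h : HasDerivAt f f' t) : HasDerivAt (fun s => (f s).2) f'.2 t := by
  simpa using h.hasFDerivAt.snd.hasDerivAt

end Prod

section ODE

variable {E : Type*} [NormedAddCommGroup E] [NormedSpace ℝ E] [CompleteSpace E]

theorem exists_eventually_hasDerivAt_of_contDiffAt {F : ℝ → E → E} {t₀ : ℝ} {x₀ : E}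
    (hF : ContDiffAt ℝ 1 (fun p : ℝ × E => F p.1 p.2) (t₀, x₀)) :
    ∃ γ : ℝ → E, γ t₀ = x₀ ∧ ∀ᶠ t in 𝓝 t₀, HasDerivAt γ (F t (γ t)) t := by
  -- the time-dependent field becomes autonomous once time is a coordinate moving at unit speed
  have hV : ContDiffAt ℝ 1 (fun p : ℝ × E => ((1 : ℝ), F p.1 p.2)) (t₀, x₀) :=
    contDiffAt_const.prodMk hF
  obtain ⟨α, hα₀, ε, hε, hα⟩ :=
    hV.exists_forall_mem_closedBall_exists_eq_forall_mem_Ioo_hasDerivAt₀ t₀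
  have hclock : EqOn (fun t => (α t).1) id (Ioo (t₀ - ε) (t₀ + ε)) := by
    refine isOpen_Ioo.eqOn_of_deriv_eq isPreconnected_Ioo
      (fun t ht => (hα t ht).fst.differentiableAt.differentiableWithinAt)
      differentiableOn_id (fun t ht => ?_) (x := t₀) ⟨by linarith, by linarith⟩ (by simp [hα₀])
    simp [(hα t ht).fst.deriv]
  refine ⟨fun t => (α t).2, by simp [hα₀], ?_⟩
  filter_upwards [Ioo_mem_nhds (by linarith : t₀ - ε < t₀) (by linarith : t₀ < t₀ + ε)] with t ht
  simpa [hclock ht] using (hα t ht).snd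

theorem exists_eventually_hasDerivAt_hasDerivAt_of_contDiffAt {F : ℝ → E → E} {t₀ : ℝ}
    {x₀ : E} (v₀ : E) (hF : ContDiffAt ℝ 1 (fun p : ℝ × E => F p.1 p.2) (t₀, x₀)) :
    ∃ γ v : ℝ → E, γ t₀ = x₀ ∧ v t₀ = v₀ ∧
      ∀ᶠ t in 𝓝 t₀, HasDerivAt γ (v t) t ∧ HasDerivAt v (F t (γ t)) t := by
  have hG : ContDiffAt ℝ 1 (fun p : ℝ × E × E => (p.2.2, F p.1 p.2.1)) (t₀, x₀, v₀) :=
    contDiffAt_snd.snd.prodMk <| hF.comp (t₀, x₀, v₀) (contDiffAt_fst.prodMk contDiffAt_snd.fst)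
  obtain ⟨β, hβ₀, hβ⟩ :=
    exists_eventually_hasDerivAt_of_contDiffAt (F := fun t (p : E × E) => (p.2, F t p.1)) hG
  refine ⟨fun t => (β t).1, fun t => (β t).2, by simp [hβ₀], by simp [hβ₀], ?_⟩
  filter_upwards [hβ] with t ht
  exact ⟨ht.fst, ht.snd⟩

end ODE

theorem deriv_deriv_eq_of_eventually_hasDerivAt {E : Type*} [NormedAddCommGroup E]
    [NormedSpace ℝ E] {γ v : ℝ → E} {a : E} {t : ℝ}
    (hγ : ∀ᶠ s in 𝓝 t, HasDerivAt γ (v s) s) (hv : HasDerivAt v a t) :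
    deriv (deriv γ) t = a := by
  have hderiv : deriv γ =ᶠ[𝓝 t] v := hγ.mono fun _ hs => hs.deriv
  rw [hderiv.deriv_eq, hv.deriv]

theorem inner_eq_zero_of_eventually_norm_eq {E : Type*} [NormedAddCommGroup E]
    [InnerProductSpace ℝ E] {γ : ℝ → E} {γ' : E} {t c : ℝ} (hγ : HasDerivAt γ γ' t)
    (hc : ∀ᶠ s in 𝓝 t, ‖γ s‖ = c) : inner ℝ (γ t) γ' = 0 := by
  have hconst : HasDerivAt (‖γ ·‖ ^ 2) 0 t :=
    (hasDerivAt_const t (c ^ 2)).congr_of_eventuallyEq (hc.mono fun s hs => by simp [hs])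
  simpa using hγ.norm_sq.unique hconst

section CircularMotion

variable {E : Type*} [NormedAddCommGroup E] [NormedSpace ℝ E]

noncomputable def circularMotion (u w : E) (ω t : ℝ) : E := cos (ω * t) • u + sin (ω * t) • w

@[simp]
theorem circularMotion_zero (u w : E) (ω : ℝ) : circularMotion u w ω 0 = u := by
  simp [circularMotion]

theorem circularMotion_neg (u w : E) (ω t : ℝ) :
    circularMotion (-u) (-w) ω t = -circularMotion u w ω t := by
  simp only [circularMotion, smul_neg, neg_add]

theorem contDiff_circularMotion (u w : E) (ω : ℝ) {n : WithTop ℕ∞} :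
    ContDiff ℝ n (circularMotion u w ω) :=
  ((contDiff_cos.comp (contDiff_const.mul contDiff_id)).smul contDiff_const).add
    ((contDiff_sin.comp (contDiff_const.mul contDiff_id)).smul contDiff_const)

theorem hasDerivAt_circularMotion (u w : E) (ω t : ℝ) :
    HasDerivAt (circularMotion u w ω) (ω • circularMotion w (-u) ω t) t := by
  have hθ : HasDerivAt (ω * ·) ω t := by simpa using (hasDerivAt_id t).const_mul ω
  refine ((hθ.cos.smul_const u).add (hθ.sin.smul_const w)).congr_deriv ?_
  simp only [circularMotion, smul_add, smul_neg, smul_smul]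
  module

theorem deriv_deriv_circularMotion (u w : E) (ω t : ℝ) :
    deriv (deriv (circularMotion u w ω)) t = -ω ^ 2 • circularMotion u w ω t := by
  have hderiv : deriv (circularMotion u w ω) = ω • circularMotion w (-u) ω :=
    funext fun s => (hasDerivAt_circularMotion u w ω s).deriv
  rw [hderiv, ((hasDerivAt_circularMotion w (-u) ω t).const_smul ω).deriv,
    circularMotion_neg, smul_smul, smul_neg, ← neg_smul, sq]

end CircularMotion

theorem norm_circularMotion {E : Type*} [NormedAddCommGroup E] [InnerProductSpace ℝ E]
    {u w : E} {r : ℝ} (hu : ‖u‖ = r) (hw : ‖w‖ = r) (huw : inner ℝ u w = 0) (ω t : ℝ) : ‖circularMotion u w ω t‖ = r := by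
  have hr : 0 ≤ r := hu ▸ norm_nonneg u
  rw [← sq_eq_sq₀ (norm_nonneg _) hr, circularMotion, norm_add_sq_real, inner_smul_left,
    inner_smul_right, huw, norm_smul, norm_smul, hu, hw, mul_pow, mul_pow, Real.norm_eq_abs,
    Real.norm_eq_abs, sq_abs, sq_abs]
  simp only [mul_zero, add_zero, ← add_mul, cos_sq_add_sin_sq, one_mul]

section Gravity

variable {E : Type*} [NormedAddCommGroup E] [InnerProductSpace ℝ E]

noncomputable def gravity (d : E) : E := (‖d‖ ^ 3)⁻¹ • d

theorem gravity_of_norm_eq_one {d : E} (hd : ‖d‖ = 1) : gravity d = d := by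
  simp [gravity, hd]

theorem contDiffAt_gravity {d : E} (hd : d ≠ 0) {n : WithTop ℕ∞} : ContDiffAt ℝ n gravity d :=
  (((contDiffAt_norm ℝ hd).pow 3).inv (pow_ne_zero 3 (norm_ne_zero_iff.2 hd))).smul contDiffAt_id

theorem contDiffAt_gravity_sub {q : ℝ → E} {n : WithTop ℕ∞} (hq : ContDiff ℝ n q) {t : ℝ}
    {x : E} (hx : q t ≠ x) : ContDiffAt ℝ n (fun p : ℝ × E => gravity (q p.1 - p.2)) (t, x) :=
  ContDiffAt.comp (g := gravity) (f := fun p : ℝ × E => q p.1 - p.2) _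
    (contDiffAt_gravity (sub_ne_zero.2 hx)) ((hq.comp contDiff_fst).sub contDiff_snd).contDiffAt

end Gravity

namespace RestrictedThreeBody

noncomputable def halfE₀ : EuclideanSpace ℝ (Fin 2) := !₂[1 / 2, 0]

noncomputable def halfE₁ : EuclideanSpace ℝ (Fin 2) := !₂[0, 1 / 2]

noncomputable def primary₁ : ℝ → EuclideanSpace ℝ (Fin 2) := circularMotion halfE₀ halfE₁ √2

noncomputable def primary₂ : ℝ → EuclideanSpace ℝ (Fin 2) :=
  circularMotion (-halfE₀) (-halfE₁) √2

noncomputable def thirdBodyAccel (t : ℝ) (x : EuclideanSpace ℝ (Fin 2)) :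
    EuclideanSpace ℝ (Fin 2) :=
  gravity (primary₁ t - x) + gravity (primary₂ t - x)

theorem norm_halfE₀ : ‖halfE₀‖ = 1 / 2 := by
  simp [halfE₀, EuclideanSpace.norm_eq]

theorem primary₂_eq_neg (t : ℝ) : primary₂ t = -primary₁ t :=
  circularMotion_neg _ _ _ _

theorem norm_primary₁ (t : ℝ) : ‖primary₁ t‖ = 1 / 2 :=
  norm_circularMotion norm_halfE₀
    (by simp [halfE₁, EuclideanSpace.norm_eq]) (by simp [halfE₀, halfE₁, PiLp.inner_apply]) _ _

theorem norm_primary₁_sub_primary₂ (t : ℝ) : ‖primary₁ t - primary₂ t‖ = 1 := by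
  rw [primary₂_eq_neg, sub_neg_eq_add, ← two_smul ℝ, norm_smul, norm_primary₁]
  norm_num

theorem deriv_deriv_primary₁ (t : ℝ) :
    deriv (deriv primary₁) t = gravity (primary₂ t - primary₁ t) := by
  rw [gravity_of_norm_eq_one (by rw [norm_sub_rev, norm_primary₁_sub_primary₂]), primary₂_eq_neg,
    primary₁, deriv_deriv_circularMotion, sq_sqrt zero_le_two]
  module

theorem deriv_deriv_primary₂ (t : ℝ) :
    deriv (deriv primary₂) t = gravity (primary₁ t - primary₂ t) := by
  rw [gravity_of_norm_eq_one (norm_primary₁_sub_primary₂ t), primary₂_eq_neg, primary₂, primary₁,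
    deriv_deriv_circularMotion, circularMotion_neg, sq_sqrt zero_le_two]
  module

theorem contDiffAt_thirdBodyAccel :
    ContDiffAt ℝ 1 (fun p : ℝ × EuclideanSpace ℝ (Fin 2) => thirdBodyAccel p.1 p.2)
      (0, (2 : ℝ) • halfE₀) :=
  (contDiffAt_gravity_sub (contDiff_circularMotion _ _ _) (ne_of_apply_ne norm (by
      norm_num [norm_smul, norm_halfE₀]))).add
    (contDiffAt_gravity_sub (contDiff_circularMotion _ _ _) (ne_of_apply_ne norm (by
      norm_num [norm_smul, norm_halfE₀])))

end RestrictedThreeBody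

open RestrictedThreeBody

/-- Partially rigid motions exist in the circular restricted three-body problem
(masses `m₁ = m₂ = 1`, `m₃ = 0`): there are curves defined on an interval
`(-T, T)` solving the equations of motion such that `r₁₂ ≡ 1` but `r₁₃` is not
constant. -/
theorem partially_rigid_restricted_three_body :
    ∃ T > (0 : ℝ), ∃ q1 q2 q3 : ℝ → EuclideanSpace ℝ (Fin 2),
      (∀ t ∈ Set.Ioo (-T) T, q1 t ≠ q2 t ∧ q1 t ≠ q3 t ∧ q2 t ≠ q3 t) ∧
      (∀ t ∈ Set.Ioo (-T) T, deriv (deriv q1) t =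
        (‖q2 t - q1 t‖ ^ 3)⁻¹ • (q2 t - q1 t)) ∧
      (∀ t ∈ Set.Ioo (-T) T, deriv (deriv q2) t =
        (‖q1 t - q2 t‖ ^ 3)⁻¹ • (q1 t - q2 t)) ∧
      (∀ t ∈ Set.Ioo (-T) T, deriv (deriv q3) t =
        (‖q1 t - q3 t‖ ^ 3)⁻¹ • (q1 t - q3 t) +
          (‖q2 t - q3 t‖ ^ 3)⁻¹ • (q2 t - q3 t)) ∧
      (∀ t ∈ Set.Ioo (-T) T, ‖q1 t - q2 t‖ = 1) ∧
      ¬(∃ c, ∀ t ∈ Set.Ioo (-T) T, ‖q1 t - q3 t‖ = c) := by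
  obtain ⟨q₃, v₃, hq₃, hv₃, hode⟩ :=
    exists_eventually_hasDerivAt_hasDerivAt_of_contDiffAt halfE₀ contDiffAt_thirdBodyAccel
  have hfar : ∀ᶠ t in 𝓝 0, 1 / 2 < ‖q₃ t‖ := by
    refine hode.self_of_nhds.1.continuousAt.norm.eventually (lt_mem_nhds ?_)
    norm_num [hq₃, norm_smul, norm_halfE₀]
  have hacc : ∀ᶠ t in 𝓝 0, deriv (deriv q₃) t = thirdBodyAccel t (q₃ t) :=
    hode.eventually_nhds.mono fun t ht =>
      deriv_deriv_eq_of_eventually_hasDerivAt (ht.mono fun _ h => h.1) ht.self_of_nhds.2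
  obtain ⟨T, hT, hsmall⟩ := Metric.eventually_nhds_iff_ball.1 (hfar.and hacc)
  rw [Real.ball_eq_Ioo, zero_sub, zero_add] at hsmall
  refine ⟨T, hT, primary₁, primary₂, q₃, fun t ht => ⟨?_, ?_, ?_⟩,
    fun t _ => deriv_deriv_primary₁ t, fun t _ => deriv_deriv_primary₂ t,
    fun t ht => (hsmall t ht).2, fun t _ => norm_primary₁_sub_primary₂ t, ?_⟩
  · exact fun h => by simpa [h] using norm_primary₁_sub_primary₂ t
  · exact ne_of_apply_ne norm (by rw [norm_primary₁]; exact (hsmall t ht).1.ne)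
  · exact ne_of_apply_ne norm (by
      rw [primary₂_eq_neg, norm_neg, norm_primary₁]; exact (hsmall t ht).1.ne)
  · rintro ⟨c, hc⟩
    have hr₁₃ : ∀ᶠ t in 𝓝 0, ‖primary₁ t - q₃ t‖ = c :=
      eventually_of_mem (Ioo_mem_nhds (neg_lt_zero.2 hT) hT) hc
    have hradial := inner_eq_zero_of_eventually_norm_eq
      ((hasDerivAt_circularMotion _ _ _ 0).sub hode.self_of_nhds.1) hr₁₃
    norm_num [hq₃, hv₃, halfE₀, halfE₁, PiLp.inner_apply] at hradial
end
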